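/- Let N ≥ 2 be an integer that is not prime, and let p be a prime number dividing N. If p ≡ ±1 (mod 8), then N is monomially reducible. -/
import Mathlib


namespace Monomial

/-- The elementary matrix `[[a, -1], [1, 0]]` over `ZMod N`. -/
def mat {N : ℕ} (a : ZMod N) : Matrix (Fin 2) (Fin 2) (ZMod N) := !![a, -1; 1, 0]

/-- `M [a₁, …, aₙ] = mat aₙ * ⋯ * mat a₁`. -/
def M {N : ℕ} (l : List (ZMod N)) : Matrix (Fin 2) (Fin 2) (ZMod N) :=
  (l.reverse.map mat).prod

/-- A tuple is a solution of (E_N) if the associated matrix is `±Id`. -/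
def IsSolution {N : ℕ} (l : List (ZMod N)) : Prop := M l = 1 ∨ M l = -1

/-- The sum `(a₁,…,aₙ) ⊕ (b₁,…,bₘ) = (a₁+bₘ, a₂,…,aₙ₋₁, aₙ+b₁, b₂,…,bₘ₋₁)`. -/
def osum {N : ℕ} (u v : List (ZMod N)) : List (ZMod N) :=
  (u.headI + v.getLastD 0) ::
    ((u.drop 1).dropLast ++ (u.getLastD 0 + v.headI) :: (v.drop 1).dropLast)

/-- Equivalence: `v` is a cyclic permutation of `u` or of the reversal of `u`. -/
def CyclicEquiv {N : ℕ} (u v : List (ZMod N)) : Prop :=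
  (∃ i, v = u.rotate i) ∨ (∃ i, v = u.reverse.rotate i)

/-- A tuple is reducible if, up to equivalence, it is a sum of an `m`-tuple (`m ≥ 3`)
with a solution of size `l ≥ 3`. -/
def Reducible {N : ℕ} (c : List (ZMod N)) : Prop :=
  ∃ a b : List (ZMod N), 3 ≤ a.length ∧ 3 ≤ b.length ∧ IsSolution b ∧
    CyclicEquiv c (osum a b)

/-- An irreducible solution: a solution which is not reducible (and `(0,0)` is
not considered irreducible). -/
def IrreducibleSol {N : ℕ} (c : List (ZMod N)) : Prop :=
  IsSolution c ∧ ¬ Reducible c ∧ c ≠ [0, 0]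

/-- The size of the `k`-monomial minimal solution of (E_N): the least `n > 0` such
that the constant `n`-tuple `(k, …, k)` is a solution. -/
noncomputable def monomialMinimalSize (N : ℕ) (k : ZMod N) : ℕ :=
  sInf {n | 0 < n ∧ IsSolution (List.replicate n k)}

/-- `N` is monomially irreducible if, for every `k ≠ 0`, the `k`-monomial minimal
solution of (E_N) is irreducible. -/
def MonomiallyIrreducible (N : ℕ) : Prop :=
  ∀ k : ZMod N, k ≠ 0 → IrreducibleSol (List.replicate (monomialMinimalSize N k) k)

/-- The continuant `Kₙ(x, …, x)` at a constant tuple: `K₀ = 1`, `K₁ = x`,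
`Kₙ₊₂ = x * Kₙ₊₁ - Kₙ`. -/
def K {N : ℕ} (x : ZMod N) : ℕ → ZMod N
  | 0 => 1
  | 1 => x
  | n + 2 => x * K x (n + 1) - K x n

section Aux

variable {N : ℕ}

lemma M_replicate (k : ZMod N) (n : ℕ) : M (List.replicate n k) = mat k ^ n := by
  simp [M, List.prod_replicate]

lemma mat_mul_aux (k : ZMod N) : mat k * !![0, 1; -1, k] = 1 := by
  ext i j
  fin_cases i <;> fin_cases j <;>
    simp [mat, Matrix.mul_apply, Fin.sum_univ_two, Matrix.one_apply] <;> ring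

lemma aux_mul_mat (k : ZMod N) : !![0, 1; -1, k] * mat k = 1 := by
  ext i j
  fin_cases i <;> fin_cases j <;>
    simp [mat, Matrix.mul_apply, Fin.sum_univ_two, Matrix.one_apply] <;> ring

lemma exists_pow_mat_eq_one (hN : 2 ≤ N) (k : ZMod N) : ∃ n, 0 < n ∧ mat k ^ n = 1 := by
  haveI : NeZero N := ⟨by omega⟩
  let u : (Matrix (Fin 2) (Fin 2) (ZMod N))ˣ :=
    ⟨mat k, !![0, 1; -1, k], mat_mul_aux k, aux_mul_mat k⟩
  refine ⟨Fintype.card (Matrix (Fin 2) (Fin 2) (ZMod N))ˣ, Fintype.card_pos, ?_⟩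
  have h := pow_card_eq_one (G := (Matrix (Fin 2) (Fin 2) (ZMod N))ˣ) (x := u)
  have h2 := congrArg Units.val h
  rwa [Units.val_pow_eq_pow_val] at h2

lemma mat_pow_two (k : ZMod N) : mat k ^ 2 = !![k ^ 2 - 1, -k; k, -1] := by
  rw [pow_two]
  ext i j
  fin_cases i <;> fin_cases j <;>
    simp [mat, Matrix.mul_apply, Fin.sum_univ_two] <;> ring

lemma mat_pow_three (k : ZMod N) :
    mat k ^ 3 = !![k ^ 3 - 2 * k, -(k ^ 2 - 1); k ^ 2 - 1, -k] := by
  show mat k ^ (2 + 1) = _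
  rw [pow_succ, mat_pow_two]
  ext i j
  fin_cases i <;> fin_cases j <;>
    simp [mat, Matrix.mul_apply, Fin.sum_univ_two] <;> ring

lemma mat_pow_four (k : ZMod N) :
    mat k ^ 4 = !![k ^ 4 - 3 * k ^ 2 + 1, -(k ^ 3 - 2 * k); k ^ 3 - 2 * k, -(k ^ 2 - 1)] := by
  show mat k ^ (3 + 1) = _
  rw [pow_succ, mat_pow_three]
  ext i j
  fin_cases i <;> fin_cases j <;>
    simp [mat, Matrix.mul_apply, Fin.sum_univ_two] <;> ring

lemma mat_pow_five (k : ZMod N) :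
    mat k ^ 5 = !![k ^ 5 - 4 * k ^ 3 + 3 * k, -(k ^ 4 - 3 * k ^ 2 + 1);
      k ^ 4 - 3 * k ^ 2 + 1, -(k ^ 3 - 2 * k)] := by
  show mat k ^ (4 + 1) = _
  rw [pow_succ, mat_pow_four]
  ext i j
  fin_cases i <;> fin_cases j <;>
    simp [mat, Matrix.mul_apply, Fin.sum_univ_two] <;> ring

lemma mat_pow_six (k : ZMod N) :
    mat k ^ 6 = !![k ^ 6 - 5 * k ^ 4 + 6 * k ^ 2 - 1, -(k ^ 5 - 4 * k ^ 3 + 3 * k);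
      k ^ 5 - 4 * k ^ 3 + 3 * k, -(k ^ 4 - 3 * k ^ 2 + 1)] := by
  show mat k ^ (5 + 1) = _
  rw [pow_succ, mat_pow_five]
  ext i j
  fin_cases i <;> fin_cases j <;>
    simp [mat, Matrix.mul_apply, Fin.sum_univ_two] <;> ring

lemma entry_one_zero {n : ℕ} {k : ZMod N} (h : IsSolution (List.replicate n k)) :
    (mat k ^ n) 1 0 = 0 := by
  have h10 : (1 : Matrix (Fin 2) (Fin 2) (ZMod N)) 1 0 = 0 :=
    Matrix.one_apply_ne (by decide)
  simp only [IsSolution, M_replicate] at h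
  rcases h with h | h <;> rw [h]
  · exact h10
  · rw [Matrix.neg_apply, h10, neg_zero]

lemma M_palindrome (β k : ZMod N) (j : ℕ) :
    M (β :: (List.replicate j k ++ [β])) = mat β * mat k ^ j * mat β := by
  simp [M, List.prod_replicate, mul_assoc]

lemma reducible_replicate (k β : ZMod N) {j n : ℕ} (hj : 1 ≤ j) (hn : j + 3 ≤ n)
    (hb : IsSolution (β :: (List.replicate j k ++ [β]))) :
    Reducible (List.replicate n k) := by
  have hlast : ∀ (l : List (ZMod N)) (y d : ZMod N), (l ++ [y]).getLastD d = y := by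
    intro l y d; simp
  have hdropl : ∀ (l : List (ZMod N)) (y : ZMod N), (l ++ [y]).dropLast = l := by
    intro l y; simp
  refine ⟨(k - β) :: (List.replicate (n - j - 2) k ++ [k - β]),
    β :: (List.replicate j k ++ [β]), ?_, ?_, hb, Or.inl ⟨0, ?_⟩⟩
  · simp only [List.length_cons, List.length_append, List.length_replicate,
      List.length_singleton]
    omega
  · simp only [List.length_cons, List.length_append, List.length_replicate,
      List.length_singleton]
    omega
  · rw [List.rotate_zero]
    simp only [osum, List.headI_cons, List.drop_one, List.tail_cons]
    rw [hdropl, hdropl]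
    rw [show (β :: (List.replicate j k ++ [β])) = (β :: List.replicate j k) ++ [β] by simp,
      hlast]
    rw [show ((k - β) :: (List.replicate (n - j - 2) k ++ [k - β]))
        = ((k - β) :: List.replicate (n - j - 2) k) ++ [k - β] by simp,
      hlast]
    have hk : k - β + β = k := by ring
    rw [hk]
    have hmerge : ∀ s t : ℕ,
        k :: (List.replicate s k ++ k :: List.replicate t k)
          = List.replicate (s + t + 2) k := by
      intro s t
      rw [show s + t + 2 = (s + 1) + (t + 1) by omega, List.replicate_add,
        List.replicate_succ, List.replicate_succ]
      simp
    rw [hmerge]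
    congr 1
    omega

end Aux

theorem stmt8 (N p : ℕ) (hN : 2 ≤ N) (hnp : ¬ N.Prime) (hp : p.Prime)
    (hdvd : p ∣ N) (h : p % 8 = 1 ∨ p % 8 = 7) :
    ¬ MonomiallyIrreducible N := by
  intro hMI
  haveI : NeZero N := ⟨by omega⟩
  haveI : Fact (1 < N) := ⟨hN⟩
  haveI : Fact p.Prime := ⟨hp⟩
  have hp2 : p ≠ 2 := by rintro rfl; omega
  have hp3 : 3 ≤ p := by have := hp.two_le; omega
  have hpN : p ≠ N := by rintro rfl; exact hnp hp
  have hpltN : p < N := lt_of_le_of_ne (Nat.le_of_dvd (by omega) hdvd) hpN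
  by_cases hsq : p * p ∣ N
  · -- Case B : p² ∣ N ; take k = (p * t : ZMod N) where N = p * p * t.
    obtain ⟨t, ht⟩ := hsq
    have ht0 : 0 < t := by
      rcases Nat.eq_zero_or_pos t with h0 | h0
      · rw [h0, mul_zero] at ht; omega
      · exact h0
    have hpt0 : 0 < p * t := Nat.mul_pos (by omega) ht0
    set k : ZMod N := ((p * t : ℕ) : ZMod N) with hkdef
    have hk0 : k ≠ 0 := by
      rw [hkdef, Ne, ZMod.natCast_eq_zero_iff]
      intro hd
      have hle := Nat.le_of_dvd hpt0 hd
      rw [ht] at hle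
      nlinarith
    have hk2 : k ^ 2 = 0 := by
      rw [hkdef, ← Nat.cast_pow, show (p * t) ^ 2 = N * t by rw [ht]; ring,
        Nat.cast_mul, ZMod.natCast_self, zero_mul]
    have h2k : (2 : ZMod N) * k ≠ 0 := by
      rw [hkdef, show (2 : ZMod N) * ((p * t : ℕ) : ZMod N) = ((2 * (p * t) : ℕ) : ZMod N) by
        push_cast; ring]
      rw [Ne, ZMod.natCast_eq_zero_iff]
      intro hd
      have hle := Nat.le_of_dvd (by omega) hd
      rw [ht] at hle
      nlinarith
    have hbsol : IsSolution ((-k) :: (List.replicate 2 k ++ [-k])) := by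
      left
      rw [M_palindrome, mat_pow_two]
      ext i j
      fin_cases i <;> fin_cases j <;>
        simp [mat, Matrix.mul_apply, Fin.sum_univ_two, Matrix.one_apply] <;>
        first
          | linear_combination (k ^ 2 + 1) * hk2
          | linear_combination k * hk2
          | linear_combination (-k) * hk2
          | linear_combination hk2
          | linear_combination -hk2
    have hsmall : ∀ n : ℕ, 0 < n → n < 5 → ¬ IsSolution (List.replicate n k) := by
      intro n h1 h5 hsol
      have h10 := entry_one_zero hsol
      interval_cases n
      · rw [pow_one] at h10
        simp [mat] at h10
      · rw [mat_pow_two] at h10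
        simp at h10
        exact hk0 h10
      · rw [mat_pow_three] at h10
        simp at h10
        have : (1 : ZMod N) = 0 := by linear_combination hk2 - h10
        exact one_ne_zero this
      · rw [mat_pow_four] at h10
        simp at h10
        exact h2k (by linear_combination k * hk2 - h10)
    obtain ⟨c, hc0, hc1⟩ := exists_pow_mat_eq_one hN k
    have hmem : 0 < monomialMinimalSize N k ∧
        IsSolution (List.replicate (monomialMinimalSize N k) k) :=
      Nat.sInf_mem (⟨c, hc0, Or.inl ((M_replicate k c).trans hc1)⟩ :
        Set.Nonempty {n | 0 < n ∧ IsSolution (List.replicate n k)})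
    have hge : 5 ≤ monomialMinimalSize N k := by
      by_contra hlt
      push_neg at hlt
      exact hsmall _ hmem.1 hlt hmem.2
    have hred : Reducible (List.replicate (monomialMinimalSize N k) k) :=
      reducible_replicate k (-k) (by norm_num) (by omega) hbsol
    obtain ⟨_, hnr, _⟩ := hMI k hk0
    exact hnr hred
  · -- Case A : p² ∤ N ; CRT with q = N / p.
    obtain ⟨q, hq⟩ := id hdvd
    have hq0 : q ≠ 0 := by rintro rfl; rw [mul_zero] at hq; omega
    have hq1 : q ≠ 1 := by rintro rfl; rw [mul_one] at hq; exact hpN hq.symm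
    have hq2 : 2 ≤ q := by omega
    haveI : Fact (1 < q) := ⟨by omega⟩
    have hqdvd : q ∣ N := ⟨p, by rw [hq]; ring⟩
    have hcop : Nat.Coprime p q := by
      rw [Nat.Prime.coprime_iff_not_dvd hp]
      intro hdq
      exact hsq (by rw [hq]; exact mul_dvd_mul_left p hdq)
    obtain ⟨α, hα⟩ : ∃ α : ZMod p, α ^ 2 = 2 := by
      obtain ⟨α, hα⟩ := (ZMod.exists_sq_eq_two_iff hp2).mpr h
      exact ⟨α, by rw [pow_two]; exact hα.symm⟩
    have h2p : (2 : ZMod p) ≠ 0 := by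
      intro e
      rw [show (2 : ZMod p) = ((2 : ℕ) : ZMod p) by norm_num,
        ZMod.natCast_eq_zero_iff] at e
      have := Nat.le_of_dvd (by norm_num) e
      omega
    have hα0 : α ≠ 0 := by
      intro e
      rw [e] at hα
      exact h2p (by linear_combination -hα)
    obtain ⟨c, hc⟩ := Nat.chineseRemainder hcop α.val 1
    have hcp : ((c : ℕ) : ZMod p) = α := by
      rw [(ZMod.natCast_eq_natCast_iff _ _ _).mpr hc.1]
      exact ZMod.natCast_rightInverse α
    have hcq : ((c : ℕ) : ZMod q) = 1 := by
      rw [(ZMod.natCast_eq_natCast_iff _ _ _).mpr hc.2]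
      exact Nat.cast_one
    set k : ZMod N := ((c : ℕ) : ZMod N) with hkdef
    set fp := ZMod.castHom hdvd (ZMod p) with hfpdef
    set fq := ZMod.castHom hqdvd (ZMod q) with hfqdef
    have hfpk : fp k = α := by rw [hkdef, map_natCast, hcp]
    have hfqk : fq k = 1 := by rw [hkdef, map_natCast, hcq]
    have hk0 : k ≠ 0 := by
      intro e
      have : α = 0 := by rw [← hfpk, e, map_zero]
      exact hα0 this
    have hrel : k ^ 4 - 3 * k ^ 2 + 2 = 0 := by
      have hdp : (p : ℤ) ∣ ((c : ℤ) ^ 4 - 3 * (c : ℤ) ^ 2 + 2) := by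
        rw [← ZMod.intCast_zmod_eq_zero_iff_dvd]
        push_cast
        rw [hcp]
        linear_combination (α ^ 2 - 1) * hα
      have hdq : (q : ℤ) ∣ ((c : ℤ) ^ 4 - 3 * (c : ℤ) ^ 2 + 2) := by
        rw [← ZMod.intCast_zmod_eq_zero_iff_dvd]
        push_cast
        rw [hcq]
        norm_num
      have hdN : (N : ℤ) ∣ ((c : ℤ) ^ 4 - 3 * (c : ℤ) ^ 2 + 2) := by
        rw [hq]
        push_cast
        exact (Nat.isCoprime_iff_coprime.mpr hcop).mul_dvd hdp hdq
      have hz := (ZMod.intCast_zmod_eq_zero_iff_dvd _ N).mpr hdN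
      push_cast at hz
      rw [hkdef]
      convert hz using 2
    have hbsol : IsSolution ((2 * k - k ^ 3) :: (List.replicate 4 k ++ [2 * k - k ^ 3])) := by
      left
      rw [M_palindrome, mat_pow_four]
      ext i j
      fin_cases i <;> fin_cases j <;>
        simp [mat, Matrix.mul_apply, Fin.sum_univ_two, Matrix.one_apply] <;>
        first
          | linear_combination (k ^ 6 - 4 * k ^ 4 + 5 * k ^ 2 - 1) * hrel
          | linear_combination (k ^ 3 - 2 * k) * hrel
          | linear_combination (-(k ^ 3) + 2 * k) * hrel
          | linear_combination hrel
          | linear_combination -hrel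
    have hsmall : ∀ n : ℕ, 0 < n → n < 7 → ¬ IsSolution (List.replicate n k) := by
      intro n h1 h7 hsol
      have h10 := entry_one_zero hsol
      interval_cases n
      · rw [pow_one] at h10
        simp [mat] at h10
      · rw [mat_pow_two] at h10
        simp at h10
        exact hk0 h10
      · rw [mat_pow_three] at h10
        simp at h10
        have h10p := congrArg fp h10
        simp only [map_sub, map_pow, map_one, map_zero, hfpk] at h10p
        have : (1 : ZMod p) = 0 := by linear_combination h10p - hα
        exact one_ne_zero this
      · rw [mat_pow_four] at h10
        simp at h10
        have h10q := congrArg fq h10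
        simp only [map_sub, map_mul, map_pow, map_ofNat, map_zero, hfqk] at h10q
        have : (1 : ZMod q) = 0 := by linear_combination -h10q
        exact one_ne_zero this
      · rw [mat_pow_five] at h10
        simp at h10
        have h10p := congrArg fp h10
        simp only [map_add, map_sub, map_mul, map_pow, map_ofNat, map_one, map_zero,
          hfpk] at h10p
        have : (1 : ZMod p) = 0 := by linear_combination -h10p + (α ^ 2 - 1) * hα
        exact one_ne_zero this
      · rw [mat_pow_six] at h10
        simp at h10
        have h10p := congrArg fp h10
        simp only [map_add, map_sub, map_mul, map_pow, map_ofNat, map_zero, hfpk] at h10p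
        have hA0 : α = 0 := by linear_combination -h10p + (α ^ 3 - 2 * α) * hα
        exact hα0 hA0
    obtain ⟨c', hc0', hc1'⟩ := exists_pow_mat_eq_one hN k
    have hmem : 0 < monomialMinimalSize N k ∧
        IsSolution (List.replicate (monomialMinimalSize N k) k) :=
      Nat.sInf_mem (⟨c', hc0', Or.inl ((M_replicate k c').trans hc1')⟩ :
        Set.Nonempty {n | 0 < n ∧ IsSolution (List.replicate n k)})
    have hge : 7 ≤ monomialMinimalSize N k := by
      by_contra hlt
      push_neg at hlt
      exact hsmall _ hmem.1 hlt hmem.2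
    have hred : Reducible (List.replicate (monomialMinimalSize N k) k) :=
      reducible_replicate k (2 * k - k ^ 3) (by norm_num) (by omega) hbsol
    obtain ⟨_, hnr, _⟩ := hMI k hk0
    exact hnr hred

end Monomial
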